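/- arXiv:1911.04209 — 4 statements merged into one kernel-verified Lean document; each statement's English description precedes it below -/
import Mathlib

section
/- For any real numbers g_s, S with |g_s| ≤ g*, |S| ≤ n·g*, any natural number n ≥ 1, and regularization parameter λ ≥ 0, the difference |((S + g_s)²)/(n + λ + 1) − S²/(n + λ)| is at most 3·g*². -/
/-!
Write `D = n + λ`. Since `|S| ≤ n g* ≤ D g*`, it suffices to treat a real `D > 0`. Splitting
`(S + g)² / (D + 1) - S² / D = (2 S g + g²) / (D + 1) - S² / (D (D + 1))`,
the first term has absolute value at most `(2 D + 1) g*² / (D + 1) ≤ 2 g*²` and the second lies in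
`[0, g*²]`, so the difference lies in `[-3 g*², 2 g*²]`.
-/

lemma sq_add_div_succ_sub_sq_div {S g D : ℝ} (hD : 0 < D) :
    (S + g) ^ 2 / (D + 1) - S ^ 2 / D = (2 * S * g + g ^ 2) / (D + 1) - S ^ 2 / (D * (D + 1)) := by
  field_simp
  ring

lemma abs_two_mul_mul_add_sq_div_succ_le {S g c D : ℝ} (hD : 0 ≤ D) (hg : |g| ≤ c)
    (hS : |S| ≤ D * c) : |(2 * S * g + g ^ 2) / (D + 1)| ≤ 2 * c ^ 2 := by
  have hc : 0 ≤ c := (abs_nonneg g).trans hg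
  have hnum : |2 * S * g + g ^ 2| ≤ 2 * (D + 1) * c ^ 2 :=
    calc |2 * S * g + g ^ 2| ≤ |2 * S * g| + |g ^ 2| := abs_add_le _ _
      _ = 2 * |S| * |g| + |g| ^ 2 := by rw [abs_mul, abs_mul, abs_two, abs_pow]
      _ ≤ 2 * (D * c) * c + c ^ 2 := by gcongr
      _ ≤ 2 * (D + 1) * c ^ 2 := by nlinarith [sq_nonneg c]
  rw [abs_div, abs_of_pos (by linarith : (0 : ℝ) < D + 1), div_le_iff₀ (by linarith)]
  linarith

lemma sq_div_mul_succ_le {S c D : ℝ} (hD : 0 ≤ D) (hS : |S| ≤ D * c) :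
    S ^ 2 / (D * (D + 1)) ≤ c ^ 2 := by
  have hSsq : S ^ 2 ≤ (D * c) ^ 2 := sq_le_sq' (abs_le.mp hS).1 (abs_le.mp hS).2
  refine div_le_of_le_mul₀ (by positivity) (sq_nonneg c) ?_
  nlinarith [mul_nonneg hD (sq_nonneg c)]

lemma abs_sq_add_div_succ_sub_sq_div_le {S g c D : ℝ} (hD : 0 < D) (hg : |g| ≤ c)
    (hS : |S| ≤ D * c) : |(S + g) ^ 2 / (D + 1) - S ^ 2 / D| ≤ 3 * c ^ 2 := by
  rw [sq_add_div_succ_sub_sq_div hD]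
  have hfirst := abs_le.mp (abs_two_mul_mul_add_sq_div_succ_le hD.le hg hS)
  have hsecond := sq_div_mul_succ_le hD.le hS
  have hsecond_nonneg : 0 ≤ S ^ 2 / (D * (D + 1)) := by positivity
  rw [abs_le]
  constructor <;> linarith

/-- Sensitivity bound for the GBDT gain function. -/
theorem gain_sensitivity_bound (gs S gstar lam : ℝ) (n : ℕ) (hn : 1 ≤ n)
    (hgs : |gs| ≤ gstar) (hS : |S| ≤ (n : ℝ) * gstar) (hlam : 0 ≤ lam) :
    |((S + gs) ^ 2) / ((n : ℝ) + lam + 1) - S ^ 2 / ((n : ℝ) + lam)| ≤ 3 * gstar ^ 2 := by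
  have hn' : (1 : ℝ) ≤ n := by exact_mod_cast hn
  have hgstar : 0 ≤ gstar := (abs_nonneg gs).trans hgs
  have hS' : |S| ≤ ((n : ℝ) + lam) * gstar :=
    hS.trans (mul_le_mul_of_nonneg_right (by linarith) hgstar)
  exact abs_sq_add_div_succ_sub_sq_div_le (by linarith) hgs hS'
end

section
/- For any natural number n ≥ 1, real g* ≥ 0, λ ≥ 0, the expression ((n−1)²·g*²)/(n + λ + 1) − (n²·g*²)/(n + λ) has absolute value equal to |(−3n² + (1−2λ)n + λ)/((n + λ + 1)(n + λ))|·g*², and this is at most 3·g*². -/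
/-!
Over the common denominator `(n + λ + 1)(n + λ)` the difference of the two gains is `g*²` times a
rational function of `n` and `λ` whose numerator `-3n² + (1 - 2λ)n + λ` is dominated in absolute
value by three times the denominator once `n, λ ≥ 0`.
-/

lemma sq_mul_div_sub_sq_mul_div (x lam c : ℝ) (h₀ : x + lam ≠ 0) (h₁ : x + lam + 1 ≠ 0) :
    (x - 1) ^ 2 * c / (x + lam + 1) - x ^ 2 * c / (x + lam) =
      (-3 * x ^ 2 + (1 - 2 * lam) * x + lam) / ((x + lam + 1) * (x + lam)) * c := by
  field_simp
  ring

lemma abs_gain_gap_numerator_le {x lam : ℝ} (hx : 0 ≤ x) (hlam : 0 ≤ lam) :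
    |-3 * x ^ 2 + (1 - 2 * lam) * x + lam| ≤ 3 * ((x + lam + 1) * (x + lam)) := by
  rw [abs_le]
  constructor <;> nlinarith [mul_nonneg hx hlam, sq_nonneg lam]

lemma abs_gain_gap_coeff_le_three {x lam : ℝ} (hx : 0 ≤ x) (hlam : 0 ≤ lam) :
    |(-3 * x ^ 2 + (1 - 2 * lam) * x + lam) / ((x + lam + 1) * (x + lam))| ≤ 3 := by
  have hq : 0 ≤ (x + lam + 1) * (x + lam) := by nlinarith
  rw [abs_div, abs_of_nonneg hq]
  exact div_le_of_le_mul₀ hq zero_le_three (abs_gain_gap_numerator_le hx hlam)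

theorem gain_worst_case_general (n : ℕ) (gstar lam : ℝ) (hn : 1 ≤ n) (hlam : 0 ≤ lam) :
    |(((n : ℝ) - 1) ^ 2 * gstar ^ 2) / ((n : ℝ) + lam + 1) -
        ((n : ℝ) ^ 2 * gstar ^ 2) / ((n : ℝ) + lam)| =
      |(-3 * (n : ℝ) ^ 2 + (1 - 2 * lam) * (n : ℝ) + lam) /
          (((n : ℝ) + lam + 1) * ((n : ℝ) + lam))| * gstar ^ 2 ∧
    |(((n : ℝ) - 1) ^ 2 * gstar ^ 2) / ((n : ℝ) + lam + 1) -
        ((n : ℝ) ^ 2 * gstar ^ 2) / ((n : ℝ) + lam)| ≤ 3 * gstar ^ 2 := by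
  have hx : (1 : ℝ) ≤ n := by exact_mod_cast hn
  have heq := sq_mul_div_sub_sq_mul_div (n : ℝ) lam (gstar ^ 2) (by positivity) (by positivity)
  rw [heq, abs_mul, abs_of_nonneg (sq_nonneg gstar)]
  exact ⟨rfl, mul_le_mul_of_nonneg_right (abs_gain_gap_coeff_le_three n.cast_nonneg hlam)
    (sq_nonneg gstar)⟩

/-- Worst-case computation in the gain sensitivity proof. -/
theorem gain_worst_case (n : ℕ) (gstar lam : ℝ) (hn : 1 ≤ n) (hg : 0 ≤ gstar) (hlam : 0 ≤ lam) :
    |(((n : ℝ) - 1) ^ 2 * gstar ^ 2) / ((n : ℝ) + lam + 1) -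
        ((n : ℝ) ^ 2 * gstar ^ 2) / ((n : ℝ) + lam)| =
      |(-3 * (n : ℝ) ^ 2 + (1 - 2 * lam) * (n : ℝ) + lam) /
          (((n : ℝ) + lam + 1) * ((n : ℝ) + lam))| * gstar ^ 2 ∧
    |(((n : ℝ) - 1) ^ 2 * gstar ^ 2) / ((n : ℝ) + lam + 1) -
        ((n : ℝ) ^ 2 * gstar ^ 2) / ((n : ℝ) + lam)| ≤ 3 * gstar ^ 2 :=
  gain_worst_case_general n gstar lam hn hlam
end

section
/- For any real numbers g_1, …, g_n, g_s all bounded in absolute value by g* ≥ 0, any n ≥ 1, and λ ≥ 0, we have |(Σ_{i=1}^n g_i)/(n + λ) − (Σ_{i=1}^n g_i + g_s)/(n + 1 + λ)| ≤ g*/(1 + λ). -/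
/-!
With `m = n + λ` and `S = ∑ gᵢ`, the difference is `(S - m gₛ) / (m (m + 1))`, whose numerator is
at most `(n + m) g*` in absolute value. The claim then reduces to `(n + m)(1 + λ) ≤ m (m + 1)`,
which is `n (n - 1) ≥ 0`.
-/

theorem abs_sum_le_card_nsmul {ι G : Type*} [AddCommGroup G] [LinearOrder G]
    [IsOrderedAddMonoid G] (s : Finset ι) (f : ι → G) {c : G} (hf : ∀ i ∈ s, |f i| ≤ c) :
    |∑ i ∈ s, f i| ≤ s.card • c :=
  (Finset.abs_sum_le_sum_abs f s).trans (Finset.sum_le_card_nsmul s _ c hf)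

theorem abs_div_sub_div_add_one_le {k lam S x c : ℝ} (hk : 1 ≤ k) (hlam : 0 ≤ lam)
    (hS : |S| ≤ k * c) (hx : |x| ≤ c) :
    |S / (k + lam) - (S + x) / (k + 1 + lam)| ≤ c / (1 + lam) := by
  set m := k + lam
  have hm_pos : 0 < m := by positivity
  have hc : 0 ≤ c := (abs_nonneg x).trans hx
  have hdiff : S / m - (S + x) / (k + 1 + lam) = (S - m * x) / (m * (m + 1)) := by
    rw [show k + 1 + lam = m + 1 by ring]
    field_simp
    ring
  have hnum : |S - m * x| ≤ (k + m) * c := by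
    calc |S - m * x| ≤ |S| + m * |x| := by
          simpa [abs_mul, abs_of_pos hm_pos] using abs_sub S (m * x)
      _ ≤ k * c + m * c := by gcongr
      _ = (k + m) * c := by ring
  have hden : (k + m) * (1 + lam) ≤ m * (m + 1) := by nlinarith
  have hprod : 0 < m * (m + 1) := by positivity
  calc |S / m - (S + x) / (k + 1 + lam)| = |S - m * x| / (m * (m + 1)) := by
        rw [hdiff, abs_div, abs_of_pos hprod]
    _ ≤ (k + m) * c / (m * (m + 1)) := by gcongr
    _ ≤ c / (1 + lam) := by
        rw [div_le_div_iff₀ hprod (by positivity)]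
        nlinarith [mul_le_mul_of_nonneg_left hden hc]

/-- Sensitivity bound for the GBDT leaf value function. -/
theorem leaf_sensitivity_bound (n : ℕ) (g : Fin n → ℝ) (gs gstar lam : ℝ) (hn : 1 ≤ n)
    (hg : ∀ i, |g i| ≤ gstar) (hgs : |gs| ≤ gstar) (hlam : 0 ≤ lam) :
    |(∑ i, g i) / ((n : ℝ) + lam) - ((∑ i, g i) + gs) / ((n : ℝ) + 1 + lam)| ≤
      gstar / (1 + lam) := by
  have hsum : |∑ i, g i| ≤ n * gstar := by
    simpa using abs_sum_le_card_nsmul Finset.univ g fun i _ => hg i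
  exact abs_div_sub_div_add_one_le (by exact_mod_cast hn) hlam hsum hgs
end

section
/- For n ≥ 1, λ ≥ 0 and g* ≥ 0, the function n ↦ |((n−1)²)/(n+λ+1) − n²/(n+λ)|·g*² is bounded above by 3g*² and tends to 3g*² as n → ∞. -/
/-!
Writing `a = n + λ`, the identity `x² / (x + c) = x - c + c² / (x + c)` applied to both terms gives
`(n-1)²/(a+1) - n²/a = (λ+2)²/(a+1) - λ²/a - 3`.
The two fractions vanish as `n → ∞`, so the difference tends to `-3`; for `n ≥ 1` and `λ ≥ 0`
it lies in `[-3, 0]`, because `λ²/a ≤ (λ+2)²/(a+1)` and `(n-1)² ≤ n²`.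
-/

open Filter Topology

theorem sq_div_add_eq_sub_add_sq_div {K : Type*} [Field K] (x c : K) (h : x + c ≠ 0) :
    x ^ 2 / (x + c) = x - c + c ^ 2 / (x + c) := by
  field_simp
  ring

theorem gain_diff_eq {K : Type*} [Field K] (x lam : K) (h₀ : x + lam ≠ 0)
    (h₁ : x + lam + 1 ≠ 0) :
    (x - 1) ^ 2 / (x + lam + 1) - x ^ 2 / (x + lam) =
      (lam + 2) ^ 2 / (x + lam + 1) - lam ^ 2 / (x + lam) - 3 := by
  have h₁' : x - 1 + (lam + 2) ≠ 0 := by rwa [show x - 1 + (lam + 2) = x + lam + 1 by ring]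
  rw [show x + lam + 1 = x - 1 + (lam + 2) by ring, sq_div_add_eq_sub_add_sq_div _ _ h₁',
    sq_div_add_eq_sub_add_sq_div _ _ h₀]
  ring

theorem abs_gain_diff_le {x lam : ℝ} (hx : 1 ≤ x) (hlam : 0 ≤ lam) :
    |(x - 1) ^ 2 / (x + lam + 1) - x ^ 2 / (x + lam)| ≤ 3 := by
  have ha : 0 < x + lam := by linarith
  have ha₁ : 0 < x + lam + 1 := by linarith
  rw [abs_le]
  constructor
  · rw [gain_diff_eq x lam ha.ne' ha₁.ne']
    have : lam ^ 2 / (x + lam) ≤ (lam + 2) ^ 2 / (x + lam + 1) := by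
      rw [div_le_div_iff₀ ha ha₁]
      nlinarith
    linarith
  · have : (x - 1) ^ 2 / (x + lam + 1) ≤ x ^ 2 / (x + lam) :=
      div_le_div₀ (sq_nonneg x) (by nlinarith) ha (by linarith)
    linarith

theorem tendsto_const_div_natCast_add_atTop (c d : ℝ) :
    Tendsto (fun n : ℕ => c / ((n : ℝ) + d)) atTop (𝓝 0) :=
  tendsto_const_nhds.div_atTop (tendsto_natCast_atTop_atTop.atTop_add tendsto_const_nhds)

theorem tendsto_gain_diff (lam : ℝ) :
    Tendsto (fun n : ℕ => ((n : ℝ) - 1) ^ 2 / ((n : ℝ) + lam + 1) - (n : ℝ) ^ 2 / ((n : ℝ) + lam))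
      atTop (𝓝 (-3)) := by
  have hlim : Tendsto (fun n : ℕ =>
      (lam + 2) ^ 2 / ((n : ℝ) + (lam + 1)) - lam ^ 2 / ((n : ℝ) + lam) - 3) atTop (𝓝 (-3)) := by
    simpa using ((tendsto_const_div_natCast_add_atTop _ _).sub
      (tendsto_const_div_natCast_add_atTop _ _)).sub_const 3
  refine hlim.congr' ?_
  have hpos : ∀ᶠ n : ℕ in atTop, 0 < (n : ℝ) + lam :=
    (tendsto_natCast_atTop_atTop.atTop_add tendsto_const_nhds).eventually_gt_atTop 0
  filter_upwards [hpos] with n hn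
  rw [gain_diff_eq _ _ hn.ne' (by linarith), add_assoc]

theorem gain_bound_tight_general (gstar lam : ℝ) (hlam : 0 ≤ lam) :
    (∀ n : ℕ, 1 ≤ n →
      |(((n : ℝ) - 1) ^ 2) / ((n : ℝ) + lam + 1) - ((n : ℝ) ^ 2) / ((n : ℝ) + lam)| *
        gstar ^ 2 ≤ 3 * gstar ^ 2) ∧
    Filter.Tendsto
      (fun n : ℕ =>
        |(((n : ℝ) - 1) ^ 2) / ((n : ℝ) + lam + 1) - ((n : ℝ) ^ 2) / ((n : ℝ) + lam)| *
          gstar ^ 2)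
      Filter.atTop (nhds (3 * gstar ^ 2)) := by
  refine ⟨fun n hn => ?_, ?_⟩
  · exact mul_le_mul_of_nonneg_right (abs_gain_diff_le (by exact_mod_cast hn) hlam) (sq_nonneg _)
  · simpa using (tendsto_gain_diff lam).abs.mul_const (gstar ^ 2)

/-- The gain-sensitivity bound `3 g*²` is asymptotically tight. -/
theorem gain_bound_tight (gstar lam : ℝ) (hg : 0 ≤ gstar) (hlam : 0 ≤ lam) :
    (∀ n : ℕ, 1 ≤ n →
      |(((n : ℝ) - 1) ^ 2) / ((n : ℝ) + lam + 1) - ((n : ℝ) ^ 2) / ((n : ℝ) + lam)| *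
        gstar ^ 2 ≤ 3 * gstar ^ 2) ∧
    Filter.Tendsto
      (fun n : ℕ =>
        |(((n : ℝ) - 1) ^ 2) / ((n : ℝ) + lam + 1) - ((n : ℝ) ^ 2) / ((n : ℝ) + lam)| *
          gstar ^ 2)
      Filter.atTop (nhds (3 * gstar ^ 2)) :=
  gain_bound_tight_general gstar lam hlam
end
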